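/- arXiv:2408.00977 — 4 statements merged into one kernel-verified Lean document; each statement's English description precedes it below -/
import Mathlib

section
/- Let U_s : ℝ → ℝ be twice continuously differentiable, α ∈ ℝ, c ∈ ℂ, and let ψ be a twice continuously differentiable complex-valued solution of the Rayleigh equation with parameters α, c on an open interval I. Set Y(y) = (U_s(y) − c)² and suppose that (U_s(y) − c)(U_s'(y)ψ(y) − (U_s(y) − c)ψ'(y)) ≠ 0 on I. Then Ω(y) = ψ(y) / ((U_s(y) − c)(U_s'(y)ψ(y) − (U_s(y) − c)ψ'(y))) is differentiable on I and satisfies Ω'(y) = α² Y(y) Ω(y)² − Y(y)^{−1} for all y ∈ I. -/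
open Set

/-- `ψ` (together with its first and second derivative functions `ψ'`, `ψ''`) is a twice
continuously differentiable solution on `I` of the Rayleigh equation
`(Us y - c) (ψ'' - α² ψ) - Us'' ψ = 0` with parameters `α`, `c` and profile `Us`. -/
def IsRayleighSolutionOn (Us : ℝ → ℝ) (α : ℝ) (c : ℂ)
    (ψ ψ' ψ'' : ℝ → ℂ) (I : Set ℝ) : Prop :=
  (∀ y ∈ I, HasDerivAt ψ (ψ' y) y) ∧
  (∀ y ∈ I, HasDerivAt ψ' (ψ'' y) y) ∧
  ContinuousOn ψ'' I ∧
  ∀ y ∈ I, ((Us y : ℂ) - c) * (ψ'' y - (α : ℂ)^2 * ψ y)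
      - Complex.ofReal (deriv (deriv Us) y) * ψ y = 0

/-!
Write `u = Us - c` and `W = u' ψ - u ψ'`, so that Miles' function is `Ω = ψ / (u W)`. The
`u' ψ'` terms cancel in `W' = u'' ψ - u ψ''`, and the Rayleigh equation turns this into
`W' = -α² u ψ`. The quotient rule then gives
`Ω' = (ψ' u W - ψ (u' W + u W')) / (u W)² = (-W² + α² u² ψ²) / (u W)²`,
which is `α² u² Ω² - u⁻²`.
-/

section MilesRiccati

variable {𝕜 : Type*} [NontriviallyNormedField 𝕜] {𝕜' : Type*} [NontriviallyNormedField 𝕜']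
  [NormedAlgebra 𝕜 𝕜'] {u u' ψ ψ' : 𝕜 → 𝕜'} {u'' ψ'' k : 𝕜'} {y : 𝕜}

theorem hasDerivAt_wronskian_of_rayleigh (hu : HasDerivAt u (u' y) y)
    (hu' : HasDerivAt u' u'' y) (hψ : HasDerivAt ψ (ψ' y) y) (hψ' : HasDerivAt ψ' ψ'' y)
    (hray : u y * (ψ'' - k * ψ y) - u'' * ψ y = 0) :
    HasDerivAt (fun t => u' t * ψ t - u t * ψ' t) (-(k * u y * ψ y)) y := by
  refine ((hu'.mul hψ).sub (hu.mul hψ')).congr_deriv ?_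
  linear_combination -hray

theorem miles_riccati_of_hasDerivAt_wronskian (hu : HasDerivAt u (u' y) y)
    (hψ : HasDerivAt ψ (ψ' y) y)
    (hW : HasDerivAt (fun t => u' t * ψ t - u t * ψ' t) (-(k * u y * ψ y)) y)
    (hne : u y * (u' y * ψ y - u y * ψ' y) ≠ 0) :
    HasDerivAt (fun t => ψ t / (u t * (u' t * ψ t - u t * ψ' t)))
      (k * u y ^ 2 * (ψ y / (u y * (u' y * ψ y - u y * ψ' y))) ^ 2 - (u y ^ 2)⁻¹) y := by
  refine (hψ.fun_div (hu.fun_mul hW) hne).congr_deriv ?_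
  have hu0 : u y ≠ 0 := left_ne_zero_of_mul hne
  have hW0 : u' y * ψ y - u y * ψ' y ≠ 0 := right_ne_zero_of_mul hne
  generalize hWdef : u' y * ψ y - u y * ψ' y = W at hW0 ⊢
  field_simp
  linear_combination (-W) * hWdef

end MilesRiccati

theorem ContDiff.hasDerivAt_deriv {𝕜 F : Type*} [NontriviallyNormedField 𝕜]
    [NormedAddCommGroup F] [NormedSpace 𝕜 F] {f : 𝕜 → F} (hf : ContDiff 𝕜 2 f) (x : 𝕜) :
    HasDerivAt (deriv f) (deriv (deriv f) x) x :=
  ((contDiff_succ_iff_deriv.mp hf).2.2.differentiable one_ne_zero).differentiableAt.hasDerivAt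

/-- Miles' function `Ω = ψ / ((Us − c)(Us' ψ − (Us − c) ψ'))` satisfies the
Riccati equation `Ω' = α² Y Ω² − Y⁻¹` with `Y = (Us − c)²`. -/
theorem rayleigh_miles_riccati
    (Us : ℝ → ℝ) (hUs : ContDiff ℝ 2 Us) (α : ℝ) (c : ℂ)
    (a b : ℝ) (ψ ψ' ψ'' : ℝ → ℂ)
    (hsol : IsRayleighSolutionOn Us α c ψ ψ' ψ'' (Ioo a b))
    (hne : ∀ y ∈ Ioo a b,
      ((Us y : ℂ) - c) *
        (Complex.ofReal (deriv Us y) * ψ y - ((Us y : ℂ) - c) * ψ' y) ≠ 0) :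
    ∀ y ∈ Ioo a b,
      HasDerivAt
        (fun y : ℝ => ψ y /
          (((Us y : ℂ) - c) *
            (Complex.ofReal (deriv Us y) * ψ y - ((Us y : ℂ) - c) * ψ' y)))
        ((α : ℂ)^2 * ((Us y : ℂ) - c)^2 *
            (ψ y / (((Us y : ℂ) - c) *
              (Complex.ofReal (deriv Us y) * ψ y - ((Us y : ℂ) - c) * ψ' y)))^2
          - (((Us y : ℂ) - c)^2)⁻¹) y := by
  intro y hy
  obtain ⟨hψ, hψ', -, hray⟩ := hsol
  have hu : HasDerivAt (fun t => (Us t : ℂ) - c) ((deriv Us y : ℝ) : ℂ) y :=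
    (hUs.differentiable two_ne_zero).differentiableAt.hasDerivAt.ofReal_comp.sub_const c
  have hu' : HasDerivAt (fun t => ((deriv Us t : ℝ) : ℂ)) ((deriv (deriv Us) y : ℝ) : ℂ) y :=
    (hUs.hasDerivAt_deriv y).ofReal_comp
  have hW := hasDerivAt_wronskian_of_rayleigh hu hu' (hψ y hy) (hψ' y hy) (hray y hy)
  exact miles_riccati_of_hasDerivAt_wronskian hu (hψ y hy) hW (hne y hy)
end

section
/- Let U_s : ℝ → ℝ be twice continuously differentiable, α ∈ ℝ, c ∈ ℂ, and let ψ be a twice continuously differentiable complex-valued solution of the Rayleigh equation with parameters α, c on an open interval I. Set Y(y) = (U_s(y) − c)² and suppose that ψ(y) ≠ 0 and U_s(y) ≠ c on I. Then ω(y) = (U_s(y) − c)(U_s'(y)ψ(y) − (U_s(y) − c)ψ'(y)) / ψ(y) is differentiable on I and satisfies ω'(y) = −α² Y(y) + ω(y)² / Y(y) for all y ∈ I. -/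
open Set

/-! With `u = Us - c` and `q = ψ'/ψ` one has `ω = u u' - u² q`. The Rayleigh equation says
`ψ''/ψ = α² + u''/u`, so `q' = α² + u''/u - q²`, and differentiating `ω` the `u u''` terms
cancel, leaving `ω' = (u' - u q)² - α² u² = ω²/u² - α² u²`. -/

-- The left-hand side is `ω'` as produced by the product and quotient rules.
theorem riccati_identity {K : Type*} [Field K] {k u u' u'' ψ ψ' ψ'' : K}
    (hψ : ψ ≠ 0) (hu : u ≠ 0) (hode : u * (ψ'' - k * ψ) - u'' * ψ = 0) :
    ((u' * (u' * ψ - u * ψ') + u * (u'' * ψ + u' * ψ' - (u' * ψ' + u * ψ''))) * ψ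
        - u * (u' * ψ - u * ψ') * ψ') / ψ ^ 2
      = -k * u ^ 2 + (u * (u' * ψ - u * ψ') / ψ) ^ 2 / u ^ 2 := by
  field_simp
  linear_combination (-(ψ * u)) * hode

theorem hasDerivAt_riccati_omega {𝕜 𝕜' : Type*} [NontriviallyNormedField 𝕜]
    [NontriviallyNormedField 𝕜'] [NormedAlgebra 𝕜 𝕜'] {k : 𝕜'} {u u' u'' ψ ψ' ψ'' : 𝕜 → 𝕜'}
    {y : 𝕜}
    (hu : HasDerivAt u (u' y) y) (hu' : HasDerivAt u' (u'' y) y)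
    (hψ : HasDerivAt ψ (ψ' y) y) (hψ' : HasDerivAt ψ' (ψ'' y) y)
    (hψ0 : ψ y ≠ 0) (hu0 : u y ≠ 0)
    (hode : u y * (ψ'' y - k * ψ y) - u'' y * ψ y = 0) :
    HasDerivAt (fun t => u t * (u' t * ψ t - u t * ψ' t) / ψ t)
      (-k * u y ^ 2 + (u y * (u' y * ψ y - u y * ψ' y) / ψ y) ^ 2 / u y ^ 2) y := by
  rw [← riccati_identity hψ0 hu0 hode]
  exact (hu.mul ((hu'.mul hψ).sub (hu.mul hψ'))).div hψ hψ0

theorem ContDiff.hasDerivAt_ofReal_sub_const {f : ℝ → ℝ} (hf : ContDiff ℝ 1 f) (c : ℂ) (y : ℝ) :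
    HasDerivAt (fun t => (f t : ℂ) - c) (Complex.ofReal (deriv f y)) y :=
  ((hf.differentiable one_ne_zero y).hasDerivAt.ofReal_comp).sub_const c

theorem ContDiff.hasDerivAt_ofReal_deriv {f : ℝ → ℝ} (hf : ContDiff ℝ 2 f) (y : ℝ) :
    HasDerivAt (fun t => Complex.ofReal (deriv f t)) (Complex.ofReal (deriv (deriv f) y)) y := by
  have hf' : ContDiff ℝ 1 (deriv f) := (contDiff_succ_iff_deriv (n := 1)).mp hf |>.2.2
  exact (hf'.differentiable one_ne_zero y).hasDerivAt.ofReal_comp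

/-- The function `ω = (Us − c)(Us' ψ − (Us − c) ψ') / ψ` satisfies the
Riccati equation `ω' = −α² Y + ω²/Y` with `Y = (Us − c)²`. -/
theorem rayleigh_omega_riccati
    (Us : ℝ → ℝ) (hUs : ContDiff ℝ 2 Us) (α : ℝ) (c : ℂ)
    (a b : ℝ) (ψ ψ' ψ'' : ℝ → ℂ)
    (hsol : IsRayleighSolutionOn Us α c ψ ψ' ψ'' (Ioo a b))
    (hψ : ∀ y ∈ Ioo a b, ψ y ≠ 0)
    (hc : ∀ y ∈ Ioo a b, (Us y : ℂ) ≠ c) :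
    ∀ y ∈ Ioo a b,
      HasDerivAt
        (fun y : ℝ => ((Us y : ℂ) - c) *
          (Complex.ofReal (deriv Us y) * ψ y - ((Us y : ℂ) - c) * ψ' y) / ψ y)
        (-(α : ℂ)^2 * ((Us y : ℂ) - c)^2
          + (((Us y : ℂ) - c) *
              (Complex.ofReal (deriv Us y) * ψ y - ((Us y : ℂ) - c) * ψ' y) / ψ y)^2
            / ((Us y : ℂ) - c)^2) y := by
  obtain ⟨hψ₁, hψ₂, -, hode⟩ := hsol
  intro y hy
  exact hasDerivAt_riccati_omega (u'' := fun t => Complex.ofReal (deriv (deriv Us) t))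
    ((hUs.of_le one_le_two).hasDerivAt_ofReal_sub_const c y) (hUs.hasDerivAt_ofReal_deriv y)
    (hψ₁ y hy) (hψ₂ y hy) (hψ y hy) (sub_ne_zero.mpr (hc y hy)) (hode y hy)
end

section
/- Let U_s : [−1, 1] → ℝ be C^∞ and let c ∈ ℂ with Im c ≠ 0; set Y(y) = (U_s(y) − c)². Then there exist α₀ > 0 and C > 0 such that for every α ∈ (−α₀, α₀) the initial value problem ω'(y) = −α² Y(y) + ω(y)²/Y(y), ω(0) = 0, has a (unique) solution ω_α on [0, 1], and it satisfies |ω_α(1) + α² ∫₀¹ (U_s(z) − c)² dz − α⁴ ∫₀¹ (∫_z^0 (U_s(x) − c)² dx)² / (U_s(z) − c)² dz| ≤ C α⁶. -/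
open Set
open scoped NNReal

section PLaux

variable {E : Type*} [NormedAddCommGroup E] [NormedSpace ℝ E] [CompleteSpace E]

theorem IsPicardLindelof.exists_mem {v : ℝ → E → E}
    {tMin tMax : ℝ} {t₀ : Icc tMin tMax} (x₀ : E) {R L K : ℝ≥0}
    (hpl : IsPicardLindelof v t₀ x₀ R 0 L K) :
    ∃ f : ℝ → E, f t₀ = x₀ ∧
      (∀ t ∈ Icc tMin tMax, f t ∈ Metric.closedBall x₀ R) ∧
      ∀ t ∈ Icc tMin tMax, HasDerivWithinAt f (v t (f t)) (Icc tMin tMax) t := by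
  obtain ⟨f, hf0, hf⟩ := hpl.exists_eq_forall_mem_Icc_hasDerivWithinAt₀
  obtain ⟨α, hα⟩ := ODE.FunSpace.exists_isFixedPt_next hpl (Metric.mem_closedBall_self le_rfl)
  refine ⟨(ODE.FunSpace.next hpl (Metric.mem_closedBall_self le_rfl) α).compProj, ?_,
    fun t _ => ODE.FunSpace.compProj_mem_closedBall _ hpl.mul_max_le, ?_⟩
  · rw [ODE.FunSpace.compProj_val, hα, ← hα, ODE.FunSpace.next_apply₀]
  · intro t ht
    rw [hα]
    apply ODE.hasDerivWithinAt_picard_Icc t₀.2 hpl.continuousOn_uncurry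
      α.continuous_compProj.continuousOn
      (fun _ _ ↦ α.compProj_mem_closedBall hpl.mul_max_le) x₀ ht |>.congr_of_mem _ ht
    intro t' ht'
    nth_rw 1 [← hα]
    rw [ODE.FunSpace.compProj_of_mem ht', ODE.FunSpace.next_apply]

end PLaux

/-- For small `α`, the Riccati problem `ω' = −α²Y + ω²/Y`, `ω(0) = 0` on
`[0, 1]` (with `Y = (Us − c)²`, `Im c ≠ 0`) has a unique solution, and
`ω(1) = −α² ∫₀¹ Y + α⁴ ∫₀¹ ω₂²/Y + O(α⁶)` where `ω₂(z) = ∫_z⁰ Y`. -/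
theorem riccati_expansion_on_interval
    (Us : ℝ → ℝ) (hUs : ContDiffOn ℝ (⊤ : ℕ∞) Us (Icc (-1) 1)) (c : ℂ) (hc : c.im ≠ 0) :
    ∃ α₀ > 0, ∃ C > 0, ∀ α : ℝ, |α| < α₀ →
      ∃ ω : ℝ → ℂ,
        (∀ y ∈ Icc (0:ℝ) 1, HasDerivWithinAt ω
            (-(α : ℂ)^2 * ((Us y : ℂ) - c)^2 + (ω y)^2 / ((Us y : ℂ) - c)^2)
            (Icc (0:ℝ) 1) y) ∧
        ω 0 = 0 ∧
        (∀ ω' : ℝ → ℂ,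
          (∀ y ∈ Icc (0:ℝ) 1, HasDerivWithinAt ω'
              (-(α : ℂ)^2 * ((Us y : ℂ) - c)^2 + (ω' y)^2 / ((Us y : ℂ) - c)^2)
              (Icc (0:ℝ) 1) y) →
          ω' 0 = 0 → ∀ y ∈ Icc (0:ℝ) 1, ω' y = ω y) ∧
        ‖ω 1 + (α : ℂ)^2 * (∫ z in (0:ℝ)..1, ((Us z : ℂ) - c)^2)
            - (α : ℂ)^4 * (∫ z in (0:ℝ)..1,
                (∫ x in z..(0:ℝ), ((Us x : ℂ) - c)^2)^2 / ((Us z : ℂ) - c)^2)‖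
          ≤ C * α^6 := by
  classical
  set q : ℝ → ℂ := fun y => ((Us y : ℂ) - c)^2 with hqdef
  have hqy : ∀ y : ℝ, ((Us y : ℂ) - c)^2 = q y := fun _ => rfl
  set m : ℝ := c.im ^ 2 with hmdef
  have hm0 : 0 < m := by positivity
  have hmq : ∀ y : ℝ, m ≤ ‖q y‖ := by
    intro y
    have h1 : |c.im| ≤ ‖(Us y : ℂ) - c‖ := by
      have h := Complex.abs_im_le_norm ((Us y : ℂ) - c)
      simpa using h
    have h2 : ‖q y‖ = ‖(Us y : ℂ) - c‖ ^ 2 := by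
      rw [hqdef]; simp
    rw [h2, hmdef]
    calc c.im ^ 2 = |c.im| ^ 2 := (sq_abs _).symm
      _ ≤ _ := pow_le_pow_left₀ (abs_nonneg _) h1 2
  have hqne : ∀ y : ℝ, q y ≠ 0 := by
    intro y h
    have := hmq y
    rw [h, norm_zero] at this
    linarith
  have hq : ContinuousOn q (Icc (0:ℝ) 1) := by
    have h01 : Icc (0:ℝ) 1 ⊆ Icc (-1:ℝ) 1 := Icc_subset_Icc (by norm_num) le_rfl
    exact ((Complex.continuous_ofReal.comp_continuousOn
      (hUs.continuousOn.mono h01)).sub continuousOn_const).pow 2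
  obtain ⟨M₀, hM₀⟩ := isCompact_Icc.exists_bound_of_continuousOn hq
  set M : ℝ := max M₀ m with hMdef
  have hM : ∀ y ∈ Icc (0:ℝ) 1, ‖q y‖ ≤ M := fun y hy => (hM₀ y hy).trans (le_max_left _ _)
  have hmM : m ≤ M := le_max_right _ _
  have hM0 : 0 < M := lt_of_lt_of_le hm0 hmM
  refine ⟨Real.sqrt (m / (8 * M)), Real.sqrt_pos.mpr (by positivity),
    12 * M ^ 3 / m ^ 2, by positivity, ?_⟩
  intro α hα
  simp only [hqy]
  set a : ℝ := α ^ 2 with hadef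
  have ha0 : 0 ≤ a := sq_nonneg α
  have ha : 4 * M * a ≤ m := by
    have h2 : |α| ^ 2 < Real.sqrt (m / (8 * M)) ^ 2 := by
      have : (0:ℝ) ≤ |α| := abs_nonneg α
      nlinarith [Real.sqrt_nonneg (m / (8 * M))]
    rw [sq_abs, Real.sq_sqrt (by positivity)] at h2
    rw [hadef]
    have h3 : 4 * M * (m / (8 * M)) = m / 2 := by field_simp; ring
    nlinarith [mul_lt_mul_of_pos_left h2 (show (0:ℝ) < 4 * M by positivity)]
  have hαnorm : ‖(α:ℂ)^2‖ = a := by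
    rw [norm_pow, Complex.norm_real, Real.norm_eq_abs, sq_abs, hadef]
  -- the clamped vector field
  set π : ℝ → ℝ := fun t => max 0 (min 1 t) with hπdef
  have hπmem : ∀ t : ℝ, π t ∈ Icc (0:ℝ) 1 :=
    fun t => ⟨le_max_left _ _, max_le zero_le_one (min_le_left _ _)⟩
  have hπeq : ∀ t ∈ Icc (0:ℝ) 1, π t = t := by
    intro t ht
    rw [hπdef]
    simp only
    rw [min_eq_right ht.2, max_eq_right ht.1]
  set v : ℝ → ℂ → ℂ := fun t x => -(α:ℂ)^2 * q (π t) + x^2 / q (π t) with hvdef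
  have hlip : ∀ B : ℝ, 0 ≤ B → ∀ t : ℝ,
      LipschitzOnWith (Real.toNNReal (2 * B / m)) (v t) (Metric.closedBall (0:ℂ) B) := by
    intro B hB t
    rw [lipschitzOnWith_iff_dist_le_mul]
    intro x hx y hy
    rw [Metric.mem_closedBall, dist_zero_right] at hx hy
    rw [dist_eq_norm, dist_eq_norm]
    have hsub : v t x - v t y = (x + y) * (x - y) / q (π t) := by
      rw [hvdef]
      simp only
      field_simp
      ring
    rw [hsub, Real.coe_toNNReal _ (by positivity), norm_div, norm_mul]
    have hnum : ‖x + y‖ * ‖x - y‖ ≤ 2 * B * ‖x - y‖ := by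
      apply mul_le_mul_of_nonneg_right _ (norm_nonneg _)
      calc ‖x + y‖ ≤ ‖x‖ + ‖y‖ := norm_add_le _ _
        _ ≤ 2 * B := by linarith
    calc ‖x + y‖ * ‖x - y‖ / ‖q (π t)‖ ≤ 2 * B * ‖x - y‖ / m :=
          div_le_div₀ (by positivity) hnum hm0 (hmq _)
      _ = 2 * B / m * ‖x - y‖ := by ring
  have hpl : IsPicardLindelof v (tmin := 0) (tmax := 1) ⟨0, ⟨le_rfl, zero_le_one⟩⟩ (0:ℂ)
      ⟨2 * a * M, by positivity⟩ 0 ⟨a * M + (2 * a * M)^2 / m, by positivity⟩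
      (Real.toNNReal (2 * (2 * a * M) / m)) := by
    refine ⟨fun t _ => hlip (2 * a * M) (by positivity) t, ?_, ?_, ?_⟩
    · intro x _
      have hqπ : ContinuousOn (fun t => q (π t)) (Icc (0:ℝ) 1) :=
        hq.congr (fun t ht => by rw [hπeq t ht])
      exact (continuousOn_const.mul hqπ).add
        (continuousOn_const.div hqπ (fun t _ => hqne _))
    · intro t ht x hx
      rw [Metric.mem_closedBall, dist_zero_right] at hx
      have h1 : ‖v t x‖ ≤ ‖-(α:ℂ)^2 * q (π t)‖ + ‖x^2 / q (π t)‖ := norm_add_le _ _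
      have h2 : ‖-(α:ℂ)^2 * q (π t)‖ ≤ a * M := by
        rw [norm_mul, norm_neg, hαnorm]
        exact mul_le_mul_of_nonneg_left (hM _ (hπmem t)) ha0
      have h3 : ‖x^2 / q (π t)‖ ≤ (2 * a * M)^2 / m := by
        rw [norm_div, norm_pow]
        exact div_le_div₀ (by positivity) (pow_le_pow_left₀ (norm_nonneg _) hx 2) hm0 (hmq _)
      show ‖v t x‖ ≤ a * M + (2 * a * M)^2 / m
      linarith
    · show (a * M + (2 * a * M)^2 / m) * max (1 - 0 : ℝ) (0 - 0) ≤ 2 * a * M - 0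
      have hmax : max (1 - 0 : ℝ) (0 - 0) = 1 := by norm_num
      rw [hmax, mul_one]
      have h4 : (2 * a * M)^2 / m ≤ a * M := by
        rw [div_le_iff₀ hm0]
        nlinarith [mul_nonneg ha0 hM0.le]
      linarith
  obtain ⟨ω, hω0, hωmem, hωderiv⟩ := hpl.exists_mem 0
  have hωbound : ∀ t ∈ Icc (0:ℝ) 1, ‖ω t‖ ≤ 2 * a * M := by
    intro t ht
    have := hωmem t ht
    rwa [Metric.mem_closedBall, dist_zero_right] at this
  have hD : ∀ y ∈ Icc (0:ℝ) 1,
      HasDerivWithinAt ω (-(α:ℂ)^2 * q y + (ω y)^2 / q y) (Icc (0:ℝ) 1) y := by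
    intro y hy
    have h := hωderiv y hy
    rw [hvdef] at h
    simpa only [hπeq y hy] using h
  have hωc : ContinuousOn ω (Icc (0:ℝ) 1) := fun y hy => (hD y hy).continuousWithinAt
  refine ⟨ω, hD, hω0, ?_, ?_⟩
  · -- uniqueness
    intro ω' hd' h0'
    have hω'c : ContinuousOn ω' (Icc (0:ℝ) 1) := fun y hy => (hd' y hy).continuousWithinAt
    obtain ⟨B₁, hB₁⟩ := isCompact_Icc.exists_bound_of_continuousOn hω'c
    obtain ⟨B₂, hB₂⟩ := isCompact_Icc.exists_bound_of_continuousOn hωc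
    set B : ℝ := max B₁ B₂ with hBdef
    have hB0 : 0 ≤ B := le_trans (norm_nonneg (ω' 0))
      (le_trans (hB₁ 0 ⟨le_rfl, zero_le_one⟩) (le_max_left _ _))
    have key := ODE_solution_unique_of_mem_Icc_right
      (v := v) (s := fun _ => Metric.closedBall (0:ℂ) B)
      (K := Real.toNNReal (2 * B / m)) (f := ω') (g := ω) (a := 0) (b := 1)
      (fun t _ => hlip B hB0 t)
      hω'c
      (fun t ht => by
        have h := hd' t (Ico_subset_Icc_self ht)
        have h2 := h.mono_of_mem_nhdsWithin (Icc_mem_nhdsGE_of_mem ht)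
        rw [hvdef]
        simpa only [hπeq t (Ico_subset_Icc_self ht)] using h2)
      (fun t ht => by
        rw [Metric.mem_closedBall, dist_zero_right]
        exact le_trans (hB₁ t (Ico_subset_Icc_self ht)) (le_max_left _ _))
      hωc
      (fun t ht => by
        have h2 := (hD t (Ico_subset_Icc_self ht)).mono_of_mem_nhdsWithin
          (Icc_mem_nhdsGE_of_mem ht)
        rw [hvdef]
        simpa only [hπeq t (Ico_subset_Icc_self ht)] using h2)
      (fun t ht => by
        rw [Metric.mem_closedBall, dist_zero_right]
        exact le_trans (hB₂ t (Ico_subset_Icc_self ht)) (le_max_right _ _))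
      (by rw [h0', hω0])
    exact fun y hy => key hy
  · -- the estimate
    have h01 : (0:ℝ) ∈ Icc (0:ℝ) 1 := ⟨le_rfl, zero_le_one⟩
    have h11 : (1:ℝ) ∈ Icc (0:ℝ) 1 := ⟨zero_le_one, le_rfl⟩
    set w2 : ℝ → ℂ := fun t => (ω t)^2 / q t with hw2def
    have hw2c : ContinuousOn w2 (Icc (0:ℝ) 1) := (hωc.pow 2).div hq (fun t _ => hqne t)
    have hq_int : ∀ z ∈ Icc (0:ℝ) 1, IntervalIntegrable q MeasureTheory.volume 0 z := by
      intro z hz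
      apply ContinuousOn.intervalIntegrable
      rw [uIcc_of_le hz.1]
      exact hq.mono (Icc_subset_Icc le_rfl hz.2)
    have hw2_int : ∀ z ∈ Icc (0:ℝ) 1, IntervalIntegrable w2 MeasureTheory.volume 0 z := by
      intro z hz
      apply ContinuousOn.intervalIntegrable
      rw [uIcc_of_le hz.1]
      exact hw2c.mono (Icc_subset_Icc le_rfl hz.2)
    have hFTC : ∀ z ∈ Icc (0:ℝ) 1,
        ω z = -(α:ℂ)^2 * (∫ t in (0:ℝ)..z, q t) + ∫ t in (0:ℝ)..z, w2 t := by
      intro z hz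
      have h1 : ∫ t in (0:ℝ)..z, (-(α:ℂ)^2 * q t + w2 t) = ω z - ω 0 := by
        apply intervalIntegral.integral_eq_sub_of_hasDeriv_right_of_le hz.1
        · exact hωc.mono (Icc_subset_Icc le_rfl hz.2)
        · intro t ht
          have ht1 : t < 1 := lt_of_lt_of_le ht.2 hz.2
          have ht' : t ∈ Icc (0:ℝ) 1 := ⟨le_of_lt ht.1, le_of_lt ht1⟩
          exact ((hD t ht').hasDerivAt (Icc_mem_nhds ht.1 ht1)).hasDerivWithinAt
        · exact ((hq_int z hz).const_mul _).add (hw2_int z hz)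
      rw [intervalIntegral.integral_add ((hq_int z hz).const_mul _) (hw2_int z hz),
        intervalIntegral.integral_const_mul, hω0, sub_zero] at h1
      exact h1.symm
    have hPb : ∀ z ∈ Icc (0:ℝ) 1, ‖∫ t in (0:ℝ)..z, q t‖ ≤ M := by
      intro z hz
      have h : ∀ t ∈ uIoc (0:ℝ) z, ‖q t‖ ≤ M := by
        intro t ht
        rw [uIoc_of_le hz.1] at ht
        exact hM t ⟨le_of_lt ht.1, le_trans ht.2 hz.2⟩
      calc ‖∫ t in (0:ℝ)..z, q t‖ ≤ M * |z - 0| :=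
            intervalIntegral.norm_integral_le_of_norm_le_const h
        _ ≤ M * 1 := by
            apply mul_le_mul_of_nonneg_left _ hM0.le
            rw [sub_zero, abs_of_nonneg hz.1]; exact hz.2
        _ = M := mul_one M
    have hEb : ∀ z ∈ Icc (0:ℝ) 1, ‖∫ t in (0:ℝ)..z, w2 t‖ ≤ 4 * a^2 * M^2 / m := by
      intro z hz
      have h : ∀ t ∈ uIoc (0:ℝ) z, ‖w2 t‖ ≤ 4 * a^2 * M^2 / m := by
        intro t ht
        rw [uIoc_of_le hz.1] at ht
        have ht' : t ∈ Icc (0:ℝ) 1 := ⟨le_of_lt ht.1, le_trans ht.2 hz.2⟩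
        have hb : ‖ω t‖^2 ≤ (2*a*M)^2 :=
          pow_le_pow_left₀ (norm_nonneg _) (hωbound t ht') 2
        calc ‖w2 t‖ = ‖ω t‖^2 / ‖q t‖ := by
              rw [hw2def]; simp only [norm_div, norm_pow]
          _ ≤ (2*a*M)^2 / m := div_le_div₀ (by positivity) hb hm0 (hmq t)
          _ = 4 * a^2 * M^2 / m := by ring
      calc ‖∫ t in (0:ℝ)..z, w2 t‖ ≤ 4 * a^2 * M^2 / m * |z - 0| :=
            intervalIntegral.norm_integral_le_of_norm_le_const h
        _ ≤ 4 * a^2 * M^2 / m * 1 := by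
            apply mul_le_mul_of_nonneg_left _ (by positivity)
            rw [sub_zero, abs_of_nonneg hz.1]; exact hz.2
        _ = _ := mul_one _
    have hPc : ContinuousOn (fun z => ∫ t in (0:ℝ)..z, q t) (Icc (0:ℝ) 1) := by
      have h := intervalIntegral.continuousOn_primitive_interval
        (a := (0:ℝ)) (b := 1) (f := q) (μ := MeasureTheory.volume) ?_
      · rwa [uIcc_of_le zero_le_one] at h
      · rw [uIcc_of_le zero_le_one]; exact hq.integrableOn_Icc
    have hP2_int : IntervalIntegrable
        (fun z => (∫ t in (0:ℝ)..z, q t)^2 / q z) MeasureTheory.volume 0 1 := by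
      apply ContinuousOn.intervalIntegrable
      rw [uIcc_of_le zero_le_one]
      exact (hPc.pow 2).div hq (fun t _ => hqne t)
    have hI2 : (∫ z in (0:ℝ)..1, (∫ x in z..(0:ℝ), q x)^2 / q z)
        = ∫ z in (0:ℝ)..1, (∫ t in (0:ℝ)..z, q t)^2 / q z := by
      apply intervalIntegral.integral_congr
      intro z _
      have hsymm : (∫ x in z..(0:ℝ), q x) = -∫ t in (0:ℝ)..z, q t :=
        intervalIntegral.integral_symm 0 z
      show (∫ x in z..(0:ℝ), q x)^2 / q z = (∫ t in (0:ℝ)..z, q t)^2 / q z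
      rw [hsymm, neg_sq]
    have hkey : ω 1 + (α:ℂ)^2 * (∫ z in (0:ℝ)..1, q z)
        - (α:ℂ)^4 * (∫ z in (0:ℝ)..1, (∫ t in (0:ℝ)..z, q t)^2 / q z)
        = ∫ z in (0:ℝ)..1, ((ω z)^2 - (α:ℂ)^4 * (∫ t in (0:ℝ)..z, q t)^2) / q z := by
      have h1 := hFTC 1 h11
      have h2 : (α:ℂ)^4 * (∫ z in (0:ℝ)..1, (∫ t in (0:ℝ)..z, q t)^2 / q z)
          = ∫ z in (0:ℝ)..1, (α:ℂ)^4 * ((∫ t in (0:ℝ)..z, q t)^2 / q z) :=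
        (intervalIntegral.integral_const_mul _ _).symm
      have h3 : ∀ z, w2 z - (α:ℂ)^4 * ((∫ t in (0:ℝ)..z, q t)^2 / q z)
          = ((ω z)^2 - (α:ℂ)^4 * (∫ t in (0:ℝ)..z, q t)^2) / q z := by
        intro z
        rw [hw2def]
        simp only
        rw [sub_div, mul_div_assoc]
      calc ω 1 + (α:ℂ)^2 * (∫ z in (0:ℝ)..1, q z)
            - (α:ℂ)^4 * (∫ z in (0:ℝ)..1, (∫ t in (0:ℝ)..z, q t)^2 / q z)
          = (∫ t in (0:ℝ)..1, w2 t)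
            - ∫ z in (0:ℝ)..1, (α:ℂ)^4 * ((∫ t in (0:ℝ)..z, q t)^2 / q z) := by
            rw [h1, ← h2]; ring
        _ = ∫ z in (0:ℝ)..1, (w2 z - (α:ℂ)^4 * ((∫ t in (0:ℝ)..z, q t)^2 / q z)) :=
            (intervalIntegral.integral_sub (hw2_int 1 h11) (hP2_int.const_mul _)).symm
        _ = _ := intervalIntegral.integral_congr (fun z _ => h3 z)
    rw [hI2, hkey]
    have hbound : ∀ z ∈ uIoc (0:ℝ) 1,
        ‖((ω z)^2 - (α:ℂ)^4 * (∫ t in (0:ℝ)..z, q t)^2) / q z‖ ≤ 12 * a^3 * M^3 / m^2 := by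
      intro z hz
      rw [uIoc_of_le zero_le_one] at hz
      have hz' : z ∈ Icc (0:ℝ) 1 := ⟨le_of_lt hz.1, hz.2⟩
      have hsplit := hFTC z hz'
      set A : ℂ := -(α:ℂ)^2 * ∫ t in (0:ℝ)..z, q t with hAdef
      set Ez : ℂ := ∫ t in (0:ℝ)..z, w2 t with hEdef
      have hfac : (ω z)^2 - (α:ℂ)^4 * (∫ t in (0:ℝ)..z, q t)^2 = Ez * (ω z + A) := by
        have hωA : ω z - A = Ez := by rw [hsplit]; ring
        calc (ω z)^2 - (α:ℂ)^4 * (∫ t in (0:ℝ)..z, q t)^2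
            = (ω z - A) * (ω z + A) := by rw [hAdef]; ring
          _ = Ez * (ω z + A) := by rw [hωA]
      rw [hfac, norm_div, norm_mul]
      have hA : ‖A‖ ≤ a * M := by
        rw [hAdef, norm_mul, norm_neg, hαnorm]
        exact mul_le_mul_of_nonneg_left (hPb z hz') ha0
      have hsum : ‖ω z + A‖ ≤ 3 * (a * M) := by
        calc ‖ω z + A‖ ≤ ‖ω z‖ + ‖A‖ := norm_add_le _ _
          _ ≤ 2*a*M + a*M := add_le_add (hωbound z hz') hA
          _ = 3 * (a*M) := by ring
      have hnum : ‖Ez‖ * ‖ω z + A‖ ≤ (4 * a^2 * M^2 / m) * (3 * (a * M)) :=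
        mul_le_mul (hEb z hz') hsum (norm_nonneg _) (by positivity)
      calc ‖Ez‖ * ‖ω z + A‖ / ‖q z‖ ≤ (4 * a^2 * M^2 / m) * (3 * (a * M)) / m :=
            div_le_div₀ (by positivity) hnum hm0 (hmq z)
        _ = 12 * a^3 * M^3 / m^2 := by field_simp; ring
    calc ‖∫ z in (0:ℝ)..1, ((ω z)^2 - (α:ℂ)^4 * (∫ t in (0:ℝ)..z, q t)^2) / q z‖
        ≤ 12 * a^3 * M^3 / m^2 * |1 - 0| :=
          intervalIntegral.norm_integral_le_of_norm_le_const hbound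
      _ = 12 * M^3 / m^2 * α^6 := by
          rw [hadef, sub_zero, abs_one, mul_one]
          ring
end

section
/- Let n ≥ 1, θ ∈ ℝ, θ_k = θ/n + 2πk/n and t_k = e^{iθ_k} for 1 ≤ k ≤ n. Let P(t) = Σ_{j=0}^{m} a_j t^j be a polynomial with complex coefficients a_j, and set β_k = n^{−2} P'(t_k) e^{2iθ_k − 2iθ} − (n − 1) n^{−2} P(t_k) e^{iθ_k − 2iθ}. Then Σ_{k=1}^{n} β_k = Σ_{l ≥ 1, ln − 1 ≤ m} (l − 1) a_{ln − 1} e^{i(l − 2)θ}. -/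
/-!
The exponentials in `β_k` are `t_k² e^{-2iθ}` and `t_k e^{-2iθ}`, so
`n² e^{2iθ} β_k = t_k² P'(t_k) - (n - 1) t_k P(t_k) = Σ_j (j + 1 - n) a_j t_k^{j+1}`.
The `t_k` are `e^{iθ/n}` times the `n`-th roots of unity, hence `Σ_k t_k^p` is `n e^{ipθ/n}`
when `n ∣ p` and vanishes otherwise. Only the indices `j = ln - 1` survive, and each contributes
`(ln - n) a_{ln-1} n e^{ilθ} e^{-2iθ} / n² = (l - 1) a_{ln-1} e^{i(l-2)θ}`.
-/

open Complex Finset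

/-- The angle `θ_k = θ/n + 2πk/n`. -/
noncomputable def thetaK (n : ℕ) (θ : ℝ) (k : ℕ) : ℝ := θ/n + 2*Real.pi*k/n

/-- The root `t_k = e^{iθ_k}` of `t^n = e^{iθ}`. -/
noncomputable def tK (n : ℕ) (θ : ℝ) (k : ℕ) : ℂ :=
  Complex.exp ((thetaK n θ k : ℝ) * Complex.I)

/-- `β_k = n⁻² P'(t_k) e^{2iθ_k − 2iθ} − (n−1) n⁻² P(t_k) e^{iθ_k − 2iθ}` for the polynomial
`P(t) = Σ_{j=0}^m a_j t^j`. -/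
noncomputable def betaCoef (n : ℕ) (θ : ℝ) (m : ℕ) (a : ℕ → ℂ) (k : ℕ) : ℂ :=
  (∑ j ∈ Finset.range (m+1), (j : ℂ) * a j * (tK n θ k)^(j-1)) / (n : ℂ)^2 *
      Complex.exp ((2 * thetaK n θ k - 2 * θ : ℝ) * Complex.I)
    - ((n : ℂ) - 1) / (n : ℂ)^2 *
      (∑ j ∈ Finset.range (m+1), a j * (tK n θ k)^j) *
      Complex.exp ((thetaK n θ k - 2 * θ : ℝ) * Complex.I)

theorem sum_Icc_one_pow_of_pow_eq_one {K : Type*} [Field K] [DecidableEq K] {w : K} {n : ℕ}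
    (hw : w ^ n = 1) : ∑ k ∈ Icc 1 n, w ^ k = if w = 1 then (n : K) else 0 := by
  split_ifs with h
  · simp [h]
  have hgeom : ∑ k ∈ range n, w ^ k = 0 := by
    have h' := geom_sum_mul w n
    rw [hw, sub_self] at h'
    exact (mul_eq_zero.1 h').resolve_right (sub_ne_zero.2 h)
  rw [← Ico_add_one_right_eq_Icc, sum_Ico_eq_sum_range, add_tsub_cancel_right]
  simp_rw [pow_add, pow_one, ← mul_sum, hgeom, mul_zero]

theorem tK_eq_mul_pow (n : ℕ) (θ : ℝ) (k : ℕ) :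
    tK n θ k = exp (θ / n * I) * exp (2 * Real.pi * I / n) ^ k := by
  rw [tK, thetaK, ← exp_nat_mul, ← exp_add]
  congr 1
  push_cast
  ring

theorem sum_tK_pow {n : ℕ} (hn : n ≠ 0) (θ : ℝ) (p : ℕ) :
    ∑ k ∈ Icc 1 n, tK n θ k ^ p = if n ∣ p then n * exp (p * (θ / n * I)) else 0 := by
  set ζ := exp (2 * Real.pi * I / n)
  have hζ : IsPrimitiveRoot ζ n := isPrimitiveRoot_exp n hn
  have hpow (k : ℕ) : tK n θ k ^ p = exp (θ / n * I) ^ p * (ζ ^ p) ^ k := by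
    rw [tK_eq_mul_pow, mul_pow, ← pow_mul, ← pow_mul, mul_comm k]
  have hζp : (ζ ^ p) ^ n = 1 := by rw [← pow_mul, mul_comm, pow_mul, hζ.pow_eq_one, one_pow]
  simp only [hpow, ← mul_sum, sum_Icc_one_pow_of_pow_eq_one hζp, hζ.pow_eq_one_iff_dvd,
    ← exp_nat_mul]
  split_ifs <;> ring

theorem sum_range_ite_dvd_succ {M : Type*} [AddCommMonoid M] {n : ℕ} (hn : 0 < n) (m : ℕ)
    (F : ℕ → M) :
    ∑ j ∈ range (m + 1), (if n ∣ j + 1 then F (j + 1) else 0)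
      = ∑ l ∈ Icc 1 (m + 1), if l * n - 1 ≤ m then F (l * n) else 0 := by
  rw [← sum_filter, ← sum_filter]
  have hdiv {j c : ℕ} (hc : j + 1 = n * c) : (j + 1) / n = c ∧ c * n - 1 = j :=
    ⟨by rw [hc, Nat.mul_div_cancel_left _ hn], by rw [mul_comm, ← hc, Nat.add_sub_cancel]⟩
  have hmul {l : ℕ} (hl : 1 ≤ l) : l * n - 1 + 1 = l * n := Nat.sub_add_cancel (one_le_mul hl hn)
  refine sum_nbij' (fun j ↦ (j + 1) / n) (fun l ↦ l * n - 1) ?_ ?_ ?_ ?_ ?_ <;>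
    simp only [mem_filter, mem_range, mem_Icc, and_imp]
  · rintro j hj ⟨c, hc⟩
    obtain ⟨hq, hj'⟩ := hdiv hc
    rw [hq, hj']
    have hc0 : 0 < c := Nat.pos_of_ne_zero (by rintro rfl; simp at hc)
    exact ⟨⟨hc0, by nlinarith⟩, by omega⟩
  · rintro l hl - hlm
    exact ⟨by omega, l, by rw [hmul hl, mul_comm]⟩
  · rintro j - ⟨c, hc⟩
    rw [(hdiv hc).1, (hdiv hc).2]
  · rintro l hl - -
    rw [hmul hl, Nat.mul_div_cancel _ hn]
  · rintro j - ⟨c, hc⟩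
    rw [(hdiv hc).1, mul_comm, ← hc]

theorem betaCoef_eq_sum (n : ℕ) (θ : ℝ) (m : ℕ) (a : ℕ → ℂ) (k : ℕ) :
    betaCoef n θ m a k = ∑ j ∈ range (m + 1),
      (((j + 1 : ℕ) : ℂ) - n) * a j * exp (-(2 * θ * I)) / n ^ 2 * tK n θ k ^ (j + 1) := by
  have hE₂ : exp (((2 * thetaK n θ k - 2 * θ : ℝ) : ℂ) * I)
      = tK n θ k ^ 2 * exp (-(2 * θ * I)) := by
    rw [tK, ← exp_nat_mul, ← exp_add]; congr 1; push_cast; ring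
  have hE₁ : exp (((thetaK n θ k - 2 * θ : ℝ) : ℂ) * I) = tK n θ k * exp (-(2 * θ * I)) := by
    rw [tK, ← exp_add]; congr 1; push_cast; ring
  rw [betaCoef, hE₂, hE₁, sum_div, sum_mul, mul_sum, sum_mul, ← sum_sub_distrib]
  refine sum_congr rfl fun j _ ↦ ?_
  -- `j - 1` truncates at `j = 0`, where the factor `j` kills the term anyway.
  rcases j with _ | j
  · push_cast; ring
  · simp only [Nat.add_sub_cancel]; push_cast; ring

/-- `Σ_{k=1}^n β_k = Σ_{l ≥ 1, ln−1 ≤ m} (l−1) a_{ln−1} e^{i(l−2)θ}`. -/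
theorem sum_betaK_eq
    (n : ℕ) (hn : 1 ≤ n) (θ : ℝ) (m : ℕ) (a : ℕ → ℂ) :
    ∑ k ∈ Finset.Icc 1 n, betaCoef n θ m a k
      = ∑ l ∈ Finset.Icc 1 (m+1),
          if l * n - 1 ≤ m then
            ((l : ℂ) - 1) * a (l * n - 1) *
              Complex.exp ((((l : ℝ) - 2) * θ : ℝ) * Complex.I)
          else 0 := by
  have hn0 : n ≠ 0 := by omega
  simp only [betaCoef_eq_sum]
  rw [sum_comm]
  simp only [← mul_sum, sum_tK_pow hn0, mul_ite, mul_zero]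
  refine (sum_range_ite_dvd_succ hn m fun p ↦ ((p : ℂ) - n) * a (p - 1) *
    exp (-(2 * θ * I)) / n ^ 2 * (n * exp (p * (θ / n * I)))).trans (sum_congr rfl fun l _ ↦ ?_)
  have hexp : exp (-(2 * θ * I)) * exp ((l * n : ℕ) * (θ / n * I))
      = exp ((((l : ℝ) - 2) * θ : ℝ) * I) := by
    rw [← exp_add]; congr 1; push_cast; field_simp; ring
  split_ifs
  · rw [← hexp]; push_cast; field_simp
  · rfl
end
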